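/- arXiv:1707.00304 — 2 statements merged into one kernel-verified Lean document; each statement's English description precedes it below -/
import Mathlib

section
/- Proposition 2 (MMF-DoF of degraded beamforming): Suppose N ≥ 1, M ≥ 1, σ² > 0, and h_k ≠ 0 for every user k. Then lim_{P→∞} ℛ̃(P)/log₂(P) = 1/M. -/
open scoped BigOperators

noncomputable section

/-- `hᴴ p`. -/
def hinner {N : ℕ} (h p : Fin N → ℂ) : ℂ := ∑ i, star (h i) * p i

/-- Transmit power of a beamformer. -/
def bpow {N : ℕ} (p : Fin N → ℂ) : ℝ := ∑ i, ‖p i‖ ^ 2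

/-- Generic rank assumption. -/
def GenericRank {N K : ℕ} (h : Fin K → Fin N → ℂ) : Prop :=
  ∀ S : Finset (Fin K),
    (Matrix.of fun (i : Fin N) (k : S) => h k.1 i).rank = min N S.card

/-- Size of group `m` (groups indexed from `0`). -/
def Gsize {K M : ℕ} (μ : Fin K → Fin M) (m : ℕ) : ℕ :=
  (Finset.univ.filter fun k => (μ k : ℕ) = m).card

/-- `N_L = 1 + Σ_{m=2}^{L} G_m` (`1`-indexed), i.e. `1 + Σ_{m=1}^{L-1} G_m` with our
`0`-indexed groups. -/
def NL {K M : ℕ} (μ : Fin K → Fin M) (L : ℕ) : ℕ :=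
  1 + ∑ m ∈ Finset.Ico 1 L, Gsize μ m

/-- Rate of user `k` under classical (designated) beamforming `p`. -/
def userRate {N K M : ℕ} (h : Fin K → Fin N → ℂ) (μ : Fin K → Fin M)
    (σ2 : ℝ) (p : Fin M → Fin N → ℂ) (k : Fin K) : ℝ :=
  Real.logb 2 (1 + ‖hinner (h k) (p (μ k))‖ ^ 2 /
    ((∑ m ∈ Finset.univ.erase (μ k), ‖hinner (h k) (p m)‖ ^ 2) + σ2))

/-- Rate of the `π(m)`-th stream at user `k` under degraded beamforming with decoding
order `π`: streams `π(1),…,π(m-1)` have already been decoded and cancelled, and streams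
`π(j)`, `j > m`, are treated as noise. -/
def degRate {N K M : ℕ} (h : Fin K → Fin N → ℂ) (σ2 : ℝ)
    (π : Equiv.Perm (Fin M)) (p : Fin M → Fin N → ℂ) (k : Fin K) (m : Fin M) : ℝ :=
  Real.logb 2 (1 + ‖hinner (h k) (p (π m))‖ ^ 2 /
    ((∑ j ∈ Finset.univ.filter (fun j => m < j), ‖hinner (h k) (p (π j))‖ ^ 2) + σ2))

/-- Max-min fair value of degraded beamforming: the supremum over decoding orders `π` and
feasible beamformers of the minimum over `m` of the `π(m)`-th group rate, the latter being
the minimum of `R̃_i^{π(m)}` over all users `i` in groups `π(m), π(m+1), …, π(M)`. -/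
def MMFdegraded {N K M : ℕ} (h : Fin K → Fin N → ℂ) (μ : Fin K → Fin M)
    (σ2 : ℝ) (P : ℝ) : ℝ :=
  sSup { r : ℝ | ∃ (π : Equiv.Perm (Fin M)) (p : Fin M → Fin N → ℂ),
    (∑ m, bpow (p m)) ≤ P ∧
    r = ⨅ m : Fin M, ⨅ i : {i : Fin K // m ≤ π.symm (μ i)}, degRate h σ2 π p i.1 m }


/-!
Upper bound: a user of the group decoded last has to decode all `M` streams, and by successive
cancellation the sum of its `M` stream rates telescopes to its single-user rate
`log₂ (1 + ‖h‖² P / σ²)`; so the minimum stream rate is at most `(log₂ P) / M + O(1)`.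

Lower bound: a space is not a finite union of hyperplanes, so some unit vector `v` meets no
channel orthogonally. Sending stream `m` along `v` with power `t ^ (M - m) / M`, `t = P ^ (1/M)`,
every user sees each stream with SINR at least a constant times `t`, i.e. rate
`(log₂ P) / M - O(1)`.
-/
open Filter Topology Finset

theorem exists_norm_eq_one_forall_inner_ne_zero {𝕜 E ι : Type*} [RCLike 𝕜]
    [NormedAddCommGroup E] [InnerProductSpace 𝕜 E] [Finite ι] [Nonempty ι] {x : ι → E}
    (hx : ∀ i, x i ≠ 0) : ∃ v : E, ‖v‖ = 1 ∧ ∀ i, inner 𝕜 (x i) v ≠ 0 := by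
  have hker : ∀ i, LinearMap.ker (innerₛₗ 𝕜 (x i)) ≠ ⊤ := fun i htop =>
    hx i (inner_self_eq_zero.1 (LinearMap.mem_ker.1 (htop ▸ Submodule.mem_top)))
  obtain ⟨w, hw⟩ : ∃ w : E, ∀ i, inner 𝕜 (x i) w ≠ 0 := by
    by_contra! hcover
    obtain ⟨i, hi⟩ := Subspace.exists_eq_top_of_iUnion_eq_univ
      (p := fun i => LinearMap.ker (innerₛₗ 𝕜 (x i)))
      (Set.eq_univ_of_forall fun w => Set.mem_iUnion.2 (hcover w))
    exact hker i hi
  have hw0 : w ≠ 0 := fun h0 => hw (Classical.arbitrary ι) (by simp [h0])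
  refine ⟨((‖w‖ : 𝕜))⁻¹ • w, norm_smul_inv_norm hw0, fun i => ?_⟩
  rw [inner_smul_right]
  exact mul_ne_zero (by simpa using hw0) (hw i)

theorem tendsto_logb_one_add_mul_rpow_div_logb {b c t : ℝ} (hb : 1 < b) (hc : 0 < c)
    (ht : 0 < t) :
    Tendsto (fun P => Real.logb b (1 + c * P ^ t) / Real.logb b P) atTop (𝓝 t) := by
  have hrem : Tendsto (fun P => Real.log (P ^ (-t) + c) / Real.log P) atTop (𝓝 0) := by
    refine Tendsto.div_atTop (a := Real.log c) ?_ Real.tendsto_log_atTop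
    have := ((tendsto_rpow_neg_atTop ht).add_const c).log (by simpa using hc.ne')
    simpa using this
  have hlim := (tendsto_const_nhds (x := t)).add hrem
  rw [add_zero] at hlim
  refine hlim.congr' ?_
  filter_upwards [eventually_gt_atTop 1] with P hP
  have hP0 : 0 < P := one_pos.trans hP
  have hsplit : Real.log (1 + c * P ^ t) = t * Real.log P + Real.log (P ^ (-t) + c) := by
    rw [← Real.log_rpow hP0, ← Real.log_mul (by positivity) (by positivity), mul_add,
      ← Real.rpow_add hP0, add_neg_cancel, Real.rpow_zero, mul_comm]
  rw [Real.logb, Real.logb, div_div_div_cancel_right₀ (Real.log_pos hb).ne', hsplit, add_div,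
    mul_div_assoc, div_self (Real.log_pos hP).ne', mul_one]

theorem sum_logb_one_add_div_tail_sum {M : ℕ} (b : ℝ) (s : Fin M → ℝ) (hs : ∀ j, 0 ≤ s j)
    {σ2 : ℝ} (hσ : 0 < σ2) :
    ∑ m : Fin M, Real.logb b (1 + s m / (∑ j ∈ univ.filter (fun j => m < j), s j + σ2))
      = Real.logb b ((∑ j, s j + σ2) / σ2) := by
  set T : ℕ → ℝ := fun n => ∑ j ∈ univ.filter (fun j : Fin M => n ≤ j), s j + σ2 with hT
  have hT_pos : ∀ n, 0 < T n := fun n => add_pos_of_nonneg_of_pos (sum_nonneg fun j _ => hs j) hσ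
  have hT_succ : ∀ m : Fin M, T m = s m + T (m + 1) := by
    intro m
    have hinsert : univ.filter (fun j : Fin M => (m : ℕ) ≤ j)
        = insert m (univ.filter (fun j : Fin M => (m : ℕ) + 1 ≤ j)) := by
      ext j
      simp only [mem_filter, mem_univ, true_and, mem_insert, Fin.ext_iff]
      omega
    simp only [hT]
    rw [hinsert, sum_insert (by simp)]
    ring
  have hterm : ∀ m : Fin M,
      Real.logb b (1 + s m / (∑ j ∈ univ.filter (fun j => m < j), s j + σ2))
        = Real.logb b (T m) - Real.logb b (T (m + 1)) := by
    intro m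
    rw [← Real.logb_div (hT_pos _).ne' (hT_pos _).ne', hT_succ m, add_div,
      div_self (hT_pos _).ne', add_comm]
    rfl
  rw [sum_congr rfl fun m _ => hterm m,
    Fin.sum_univ_eq_sum_range (fun n => Real.logb b (T n) - Real.logb b (T (n + 1))),
    sum_range_sub',
    ← Real.logb_div (hT_pos _).ne' (hT_pos _).ne']
  congr 2
  · simp [hT]
  · simp [hT, fun j : Fin M => not_le.2 j.is_lt]

section Beamforming

variable {N : ℕ}

theorem hinner_eq_inner (h p : Fin N → ℂ) :
    hinner h p = inner ℂ (WithLp.toLp 2 h) (WithLp.toLp 2 p) := by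
  simp [hinner, EuclideanSpace.inner_eq_star_dotProduct, dotProduct, mul_comm]

theorem bpow_eq_norm_sq (p : Fin N → ℂ) : bpow p = ‖WithLp.toLp 2 p‖ ^ 2 := by
  simp [bpow, EuclideanSpace.norm_sq_eq]

theorem bpow_nonneg (p : Fin N → ℂ) : 0 ≤ bpow p := by
  rw [bpow_eq_norm_sq]
  positivity

theorem bpow_pos {p : Fin N → ℂ} (hp : p ≠ 0) : 0 < bpow p := by
  rw [bpow_eq_norm_sq]
  exact pow_pos (norm_pos_iff.2 (by simpa using hp)) 2

theorem bpow_le_sum_bpow {ι : Type*} [Fintype ι] (h : ι → Fin N → ℂ) (k : ι) :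
    bpow (h k) ≤ ∑ j, bpow (h j) :=
  single_le_sum (fun j _ => bpow_nonneg (h j)) (mem_univ k)

theorem bpow_smul (c : ℂ) (p : Fin N → ℂ) : bpow (c • p) = ‖c‖ ^ 2 * bpow p := by
  rw [bpow_eq_norm_sq, bpow_eq_norm_sq, WithLp.toLp_smul, norm_smul, mul_pow]

theorem norm_hinner_smul_sq (h : Fin N → ℂ) (c : ℂ) (p : Fin N → ℂ) :
    ‖hinner h (c • p)‖ ^ 2 = ‖c‖ ^ 2 * ‖hinner h p‖ ^ 2 := by
  rw [hinner_eq_inner, hinner_eq_inner, WithLp.toLp_smul, inner_smul_right, norm_mul, mul_pow]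

theorem norm_hinner_sq_le (h p : Fin N → ℂ) : ‖hinner h p‖ ^ 2 ≤ bpow h * bpow p := by
  rw [hinner_eq_inner, bpow_eq_norm_sq, bpow_eq_norm_sq, ← mul_pow]
  exact pow_le_pow_left₀ (norm_nonneg _) (norm_inner_le_norm _ _) 2

theorem exists_bpow_eq_one_forall_hinner_ne_zero {ι : Type*} [Finite ι] [Nonempty ι]
    {h : ι → Fin N → ℂ} (hch : ∀ k, h k ≠ 0) :
    ∃ v : Fin N → ℂ, bpow v = 1 ∧ ∀ k, hinner (h k) v ≠ 0 := by
  obtain ⟨v, hv, hvh⟩ := exists_norm_eq_one_forall_inner_ne_zero (𝕜 := ℂ)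
    (x := fun k => WithLp.toLp 2 (h k)) (by simpa using hch)
  refine ⟨WithLp.ofLp v, by simp [bpow_eq_norm_sq, hv], fun k => ?_⟩
  simpa [hinner_eq_inner] using hvh k

end Beamforming

section DegradedRates

variable {N K M : ℕ} (h : Fin K → Fin N → ℂ) (μ : Fin K → Fin M) {σ2 : ℝ}

def minGroupRate (σ2 : ℝ) (π : Equiv.Perm (Fin M)) (p : Fin M → Fin N → ℂ) : ℝ :=
  ⨅ m : Fin M, ⨅ i : {i : Fin K // m ≤ π.symm (μ i)}, degRate h σ2 π p i.1 m

theorem sum_degRate_le (hσ : 0 < σ2) (π : Equiv.Perm (Fin M)) (p : Fin M → Fin N → ℂ)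
    (k : Fin K) :
    ∑ m, degRate h σ2 π p k m ≤ Real.logb 2 (1 + bpow (h k) * (∑ m, bpow (p m)) / σ2) := by
  have hsignal : ∑ j, ‖hinner (h k) (p (π j))‖ ^ 2 ≤ bpow (h k) * ∑ m, bpow (p m) := by
    rw [mul_sum, ← Equiv.sum_comp π (fun m => bpow (h k) * bpow (p m))]
    exact sum_le_sum fun j _ => norm_hinner_sq_le _ _
  calc ∑ m, degRate h σ2 π p k m
      = Real.logb 2 ((∑ j, ‖hinner (h k) (p (π j))‖ ^ 2 + σ2) / σ2) :=
        sum_logb_one_add_div_tail_sum 2 _ (fun _ => by positivity) hσ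
    _ ≤ Real.logb 2 ((bpow (h k) * ∑ m, bpow (p m) + σ2) / σ2) :=
        Real.logb_le_logb_of_le one_lt_two (by positivity) (by gcongr)
    _ = Real.logb 2 (1 + bpow (h k) * (∑ m, bpow (p m)) / σ2) := by
        rw [add_div, div_self hσ.ne', add_comm]

theorem exists_forall_le_symm_apply (hsurj : Function.Surjective μ) (hM : 0 < M)
    (π : Equiv.Perm (Fin M)) : ∃ k, ∀ m, m ≤ π.symm (μ k) := by
  obtain ⟨k, hk⟩ := hsurj (π ⟨M - 1, by omega⟩)
  refine ⟨k, fun m => ?_⟩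
  rw [hk, Equiv.symm_apply_apply]
  exact Fin.le_def.2 (by simp only; omega)

theorem minGroupRate_le_degRate {π : Equiv.Perm (Fin M)} (p : Fin M → Fin N → ℂ) {k : Fin K}
    (hk : ∀ m, m ≤ π.symm (μ k)) (m : Fin M) :
    minGroupRate h μ σ2 π p ≤ degRate h σ2 π p k m :=
  (ciInf_le (Finite.bddBelow_range _) m).trans
    (ciInf_le (Finite.bddBelow_range _) (⟨k, hk m⟩ : {i : Fin K // m ≤ π.symm (μ i)}))

theorem minGroupRate_le (hsurj : Function.Surjective μ) (hM : 0 < M) (hσ : 0 < σ2)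
    {C : ℝ} (hC : ∀ k, bpow (h k) ≤ C) (π : Equiv.Perm (Fin M)) {p : Fin M → Fin N → ℂ}
    {P : ℝ} (hP : ∑ m, bpow (p m) ≤ P) :
    minGroupRate h μ σ2 π p ≤ (M : ℝ)⁻¹ * Real.logb 2 (1 + C * P / σ2) := by
  obtain ⟨k, hk_last⟩ := exists_forall_le_symm_apply μ hsurj hM π
  have hMr : (M : ℝ) * minGroupRate h μ σ2 π p ≤ Real.logb 2 (1 + C * P / σ2) :=
    calc (M : ℝ) * minGroupRate h μ σ2 π p = ∑ _m : Fin M, minGroupRate h μ σ2 π p := by simp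
      _ ≤ ∑ m, degRate h σ2 π p k m := sum_le_sum fun m _ => minGroupRate_le_degRate h μ p hk_last m
      _ ≤ Real.logb 2 (1 + bpow (h k) * (∑ m, bpow (p m)) / σ2) := sum_degRate_le h hσ π p k
      _ ≤ Real.logb 2 (1 + C * P / σ2) := by
        have hpow : 0 ≤ ∑ m, bpow (p m) := sum_nonneg fun _ _ => bpow_nonneg _
        have hCk := hC k
        have := bpow_nonneg (h k)
        refine Real.logb_le_logb_of_le one_lt_two (by positivity) ?_
        gcongr
        linarith
  rwa [le_inv_mul_iff₀ (by exact_mod_cast hM)]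

end DegradedRates

section GeometricBeamformer

variable {N : ℕ}

/-- The powers `t ^ (M - m) / M` make every stream at least `t / M` times stronger than all
later streams together, so successive decoding sees an SINR of order `t`. -/
def geometricBeamformer (M : ℕ) (v : Fin N → ℂ) (t : ℝ) : Fin M → Fin N → ℂ :=
  fun m => ((√(t ^ (M - m) / M) : ℝ) : ℂ) • v

theorem norm_hinner_geometricBeamformer_sq {M : ℕ} (g v : Fin N → ℂ) {t : ℝ} (ht : 0 ≤ t)
    (m : Fin M) :
    ‖hinner g (geometricBeamformer M v t m)‖ ^ 2 = t ^ (M - m) / M * ‖hinner g v‖ ^ 2 := by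
  rw [geometricBeamformer, norm_hinner_smul_sq, Complex.norm_real, Real.norm_eq_abs, sq_abs,
    Real.sq_sqrt (by positivity)]

theorem sum_bpow_geometricBeamformer_le {M : ℕ} {v : Fin N → ℂ} (hv : bpow v = 1) {t : ℝ}
    (ht : 1 ≤ t) : ∑ m, bpow (geometricBeamformer M v t m) ≤ t ^ M := by
  have hterm : ∀ m : Fin M, bpow (geometricBeamformer M v t m) ≤ t ^ M / M := fun m => by
    rw [geometricBeamformer, bpow_smul, hv, mul_one, Complex.norm_real, Real.norm_eq_abs, sq_abs,
      Real.sq_sqrt (by positivity)]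
    gcongr
    exact Nat.sub_le _ _
  calc ∑ m, bpow (geometricBeamformer M v t m) ≤ ∑ _m : Fin M, t ^ M / M :=
        sum_le_sum fun m _ => hterm m
    _ ≤ t ^ M := by
      rcases Nat.eq_zero_or_pos M with rfl | hM
      · simp
      · rw [sum_const, card_univ, Fintype.card_fin, nsmul_eq_mul, mul_div_cancel₀]
        positivity

theorem logb_le_degRate_geometricBeamformer {K M : ℕ} (h : Fin K → Fin N → ℂ) {σ2 : ℝ}
    (hσ : 0 < σ2) (v : Fin N → ℂ) {t : ℝ} (ht : 1 ≤ t) (k : Fin K) (m : Fin M) :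
    Real.logb 2 (1 + t * (‖hinner (h k) v‖ ^ 2 / (M * (‖hinner (h k) v‖ ^ 2 + σ2))))
      ≤ degRate h σ2 1 (geometricBeamformer M v t) k m := by
  set b := ‖hinner (h k) v‖ ^ 2
  set X := t ^ (M - (m + 1))
  have hM : (0 : ℝ) < M := by exact_mod_cast m.pos
  have hX : 1 ≤ X := one_le_pow₀ ht
  have hsignal : t ^ (M - m) / M * b = t * X * b / M := by
    rw [show M - (m : ℕ) = M - (m + 1) + 1 by omega, pow_succ]
    ring
  have hinterference : ∑ j ∈ univ.filter (fun j : Fin M => m < j), t ^ (M - j) / M * b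
      ≤ X * b := by
    calc ∑ j ∈ univ.filter (fun j : Fin M => m < j), t ^ (M - j) / M * b
        ≤ ∑ _j ∈ univ.filter (fun j : Fin M => m < j), X / M * b := by
          refine sum_le_sum fun j hj => ?_
          have hmj : (m : ℕ) < j := (mem_filter.1 hj).2
          gcongr
          exact pow_le_pow_right₀ ht (by omega)
      _ ≤ M * (X / M * b) := by
          rw [sum_const, nsmul_eq_mul]
          gcongr
          exact_mod_cast (card_filter_le _ _).trans (card_univ.trans (Fintype.card_fin M)).le
      _ = X * b := by field_simp
  unfold degRate
  simp only [Equiv.Perm.one_apply, norm_hinner_geometricBeamformer_sq _ _ (zero_le_one.trans ht)]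
  refine Real.logb_le_logb_of_le one_lt_two (by positivity) ?_
  gcongr 1 + ?_
  calc t * (b / (M * (b + σ2))) = t * X * b / M / (X * b + X * σ2) := by
        field_simp
    _ ≤ t * X * b / M / (X * b + σ2) := by
        gcongr
        nlinarith
    _ ≤ t ^ (M - m) / M * b / (∑ j ∈ univ.filter (fun j : Fin M => m < j),
          t ^ (M - j) / M * b + σ2) := by
        rw [hsignal]
        gcongr

end GeometricBeamformer

section MMFBounds

variable {N K M : ℕ} {h : Fin K → Fin N → ℂ} {μ : Fin K → Fin M} {σ2 : ℝ}

theorem MMFdegraded_le (hsurj : Function.Surjective μ) (hM : 0 < M) (hσ : 0 < σ2) {C : ℝ}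
    (hC : ∀ k, bpow (h k) ≤ C) {P : ℝ} (hP : 0 ≤ P) :
    MMFdegraded h μ σ2 P ≤ (M : ℝ)⁻¹ * Real.logb 2 (1 + C * P / σ2) := by
  obtain ⟨k, -⟩ := hsurj ⟨0, hM⟩
  have hC0 : 0 ≤ C := (bpow_nonneg _).trans (hC k)
  refine Real.sSup_le ?_ ?_
  · rintro r ⟨π, p, hp, rfl⟩
    exact minGroupRate_le h μ hsurj hM hσ hC π hp
  · have : 0 ≤ Real.logb 2 (1 + C * P / σ2) :=
      Real.logb_nonneg one_lt_two (le_add_of_nonneg_right (by positivity))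
    positivity

theorem logb_le_MMFdegraded (hsurj : Function.Surjective μ) (hM : 0 < M) (hσ : 0 < σ2)
    {v : Fin N → ℂ} (hv : bpow v = 1) {a : ℝ} (ha : 0 ≤ a)
    (hak : ∀ k, a ≤ ‖hinner (h k) v‖ ^ 2) {t : ℝ} (ht : 1 ≤ t) :
    Real.logb 2 (1 + t * (a / (M * (a + σ2)))) ≤ MMFdegraded h μ σ2 (t ^ M) := by
  have hbdd : BddAbove {r | ∃ (π : Equiv.Perm (Fin M)) (p : Fin M → Fin N → ℂ),
      ∑ m, bpow (p m) ≤ t ^ M ∧ r = minGroupRate h μ σ2 π p} := by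
    refine ⟨(M : ℝ)⁻¹ * Real.logb 2 (1 + (∑ k, bpow (h k)) * t ^ M / σ2), ?_⟩
    rintro r ⟨π, p, hp, rfl⟩
    exact minGroupRate_le h μ hsurj hM hσ (bpow_le_sum_bpow h) π hp
  refine le_trans ?_ (le_csSup hbdd
    ⟨1, geometricBeamformer M v t, sum_bpow_geometricBeamformer_le hv ht, rfl⟩)
  have : Nonempty (Fin M) := ⟨⟨0, hM⟩⟩
  refine le_ciInf fun m => ?_
  obtain ⟨k, hk⟩ := exists_forall_le_symm_apply μ hsurj hM 1
  have : Nonempty {i : Fin K // m ≤ (1 : Equiv.Perm (Fin M)).symm (μ i)} := ⟨⟨k, hk m⟩⟩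
  refine le_ciInf fun i => le_trans ?_ (logb_le_degRate_geometricBeamformer h hσ v ht i.1 m)
  have hai := hak i.1
  have hM' : (0 : ℝ) < M := by exact_mod_cast hM
  refine Real.logb_le_logb_of_le one_lt_two (by positivity) ?_
  gcongr 1 + t * ?_
  rw [div_le_div_iff₀ (by positivity) (by positivity)]
  nlinarith [mul_nonneg (mul_nonneg hM'.le hσ.le) (sub_nonneg.2 hai)]

theorem exists_pos_logb_le_MMFdegraded (hsurj : Function.Surjective μ) (hM : 0 < M)
    (hch : ∀ k, h k ≠ 0) (hσ : 0 < σ2) :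
    ∃ c > 0, ∀ P, 1 ≤ P → Real.logb 2 (1 + c * P ^ (M : ℝ)⁻¹) ≤ MMFdegraded h μ σ2 P := by
  obtain ⟨k₀, -⟩ := hsurj ⟨0, hM⟩
  have : Nonempty (Fin K) := ⟨k₀⟩
  obtain ⟨v, hv, hvh⟩ := exists_bpow_eq_one_forall_hinner_ne_zero hch
  set a := univ.inf' univ_nonempty fun k => ‖hinner (h k) v‖ ^ 2
  have ha : 0 < a := (lt_inf'_iff _).2 fun k _ => pow_pos (norm_pos_iff.2 (hvh k)) 2
  refine ⟨a / (M * (a + σ2)), by positivity, fun P hP => ?_⟩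
  have hlow := logb_le_MMFdegraded hsurj hM hσ hv ha.le (fun k => inf'_le _ (mem_univ k))
    (Real.one_le_rpow hP (inv_nonneg.2 (Nat.cast_nonneg M)))
  rwa [Real.rpow_inv_natCast_pow (by positivity) (by omega), mul_comm] at hlow

end MMFBounds

theorem stmt1_general {N K M : ℕ} (hM : 1 ≤ M)
    (h : Fin K → Fin N → ℂ) (μ : Fin K → Fin M) (hsurj : Function.Surjective μ)
    (hch : ∀ k : Fin K, h k ≠ 0)
    (σ2 : ℝ) (hσ : 0 < σ2) :
    Filter.Tendsto (fun P : ℝ => MMFdegraded h μ σ2 P / Real.logb 2 P)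
      Filter.atTop (nhds (1 / (M : ℝ))) := by
  obtain ⟨c, hc, hlower⟩ := exists_pos_logb_le_MMFdegraded hsurj hM hch hσ
  obtain ⟨k₀, -⟩ := hsurj ⟨0, hM⟩
  have hC0 : 0 < ∑ k, bpow (h k) := (bpow_pos (hch k₀)).trans_le (bpow_le_sum_bpow h k₀)
  rw [one_div]
  refine tendsto_of_tendsto_of_tendsto_of_le_of_le'
    (tendsto_logb_one_add_mul_rpow_div_logb one_lt_two hc (by positivity))
    (by simpa using (tendsto_logb_one_add_mul_rpow_div_logb one_lt_two (div_pos hC0 hσ)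
      one_pos).const_mul (M : ℝ)⁻¹) ?_ ?_
  all_goals filter_upwards [eventually_gt_atTop 1] with P hP
  · exact div_le_div_of_nonneg_right (hlower P hP.le) (Real.logb_pos one_lt_two hP).le
  · rw [div_mul_eq_mul_div, ← mul_div_assoc]
    exact div_le_div_of_nonneg_right
      (MMFdegraded_le hsurj hM hσ (bpow_le_sum_bpow h) (by positivity))
      (Real.logb_pos one_lt_two hP).le

/-- **Proposition 2 (MMF-DoF of degraded beamforming).** With `N ≥ 1` antennas, `M ≥ 1`
(nonempty) groups, noise variance `σ² > 0` and nonzero user channels,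
`ℛ̃(P)/log₂ P → 1/M` as `P → ∞`. -/
theorem stmt1 {N K M : ℕ} (hN : 1 ≤ N) (hM : 1 ≤ M)
    (h : Fin K → Fin N → ℂ) (μ : Fin K → Fin M) (hsurj : Function.Surjective μ)
    (hch : ∀ k : Fin K, h k ≠ 0)
    (σ2 : ℝ) (hσ : 0 < σ2) :
    Filter.Tendsto (fun P : ℝ => MMFdegraded h μ σ2 P / Real.logb 2 P)
      Filter.atTop (nhds (1 / (M : ℝ))) :=
  stmt1_general hM h μ hsurj hch σ2 hσ
end
end

section
/- Lemma 1 (minimum number of interfered groups): Suppose the generic rank assumption holds, G₁ ≤ … ≤ G_M, and N < N_{M_D*+1} where M_D* ∈ {1,…,M−1} satisfies N_{M_D*} ≤ N < N_{M_D*+1}. Then for every nonzero vector w ∈ ℂ^N: (a) the number of groups j ∈ {2,…,M} such that h_kᴴ w ≠ 0 for some user k ∈ 𝒢_j is at least M − M_D*; and (b) for every m ∈ {2,…,M}, the number of groups j ∈ {1,…,M}\{m} such that h_kᴴ w ≠ 0 for some user k ∈ 𝒢_j is at least M − M_D* − 1. -/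
/-! A nonzero `w` is orthogonal to fewer than `N` users, because by the generic rank assumption
any `N` channels span `ℂ^N`. Hence the groups `w` does not interfere with have total size
`< N`. Since group sizes are nondecreasing, any `t` groups with indices `≥ c` are together at
least as large as the groups `c, …, c + t - 1`, and `N < N_{M_D*+1}` says that the groups
`1, …, M_D*` (0-indexed) already have `N` users between them. This bounds the number of
non-interfered groups by `M_D* - 1` among the groups `1, …, M - 1`, and by `M_D*` among all
groups but one. -/

open scoped BigOperators

noncomputable section

open Finset
open scoped Matrix

theorem Matrix.eq_zero_of_vecMul_eq_zero_of_rank_eq_card {R m n : Type*} [Field R] [Fintype m]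
    [Fintype n] {A : Matrix m n R} (hA : A.rank = Fintype.card m) {v : m → R}
    (hv : v ᵥ* A = 0) : v = 0 := by
  have hker : LinearMap.ker Aᵀ.mulVecLin = ⊥ := by
    have := LinearMap.finrank_range_add_finrank_ker Aᵀ.mulVecLin
    rw [← Matrix.rank, Matrix.rank_transpose, hA, Module.finrank_fintype_fun_eq_card] at this
    exact Submodule.finrank_eq_zero.mp (by omega)
  have hv' : v ∈ LinearMap.ker Aᵀ.mulVecLin := by
    rw [LinearMap.mem_ker, Matrix.mulVecLin_apply, Matrix.mulVec_transpose, hv]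
  rwa [hker, Submodule.mem_bot] at hv'

theorem Finset.sum_Ico_le_sum_of_monotoneOn {β : Type*} [AddCommMonoid β] [PartialOrder β]
    [IsOrderedAddMonoid β] {f : ℕ → β} {M : ℕ} (hf : MonotoneOn f (Set.Iio M)) {c : ℕ}
    (B : Finset ℕ) (hB : B ⊆ Ico c M) : ∑ i ∈ Ico c (c + #B), f i ≤ ∑ j ∈ B, f j := by
  induction B using Finset.induction_on_max with
  | empty => simp
  | insert a B hlt ih =>
    have haB : a ∉ B := fun ha => (hlt a ha).false
    obtain ⟨hca, haM⟩ := mem_Ico.mp (hB (mem_insert_self a B))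
    have hBa : B ⊆ Ico c a := fun x hx =>
      mem_Ico.mpr ⟨(mem_Ico.mp (hB (mem_insert_of_mem hx))).1, hlt x hx⟩
    have hcard : c + #B ≤ a := by
      have := card_le_card hBa
      rw [Nat.card_Ico] at this
      omega
    rw [card_insert_of_notMem haB, ← add_assoc, sum_Ico_succ_top (Nat.le_add_right c _),
      sum_insert haB, add_comm (f a)]
    exact add_le_add (ih ((subset_insert a B).trans hB))
      (hf (Set.mem_Iio.mpr (hcard.trans_lt haM)) haM hcard)

section Interference

variable {N K M : ℕ} (h : Fin K → Fin N → ℂ) (μ : Fin K → Fin M) (w : Fin N → ℂ)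

def Interferes (j : ℕ) : Prop := ∃ k : Fin K, (μ k : ℕ) = j ∧ hinner (h k) w ≠ 0

variable {h w}

theorem card_lt_of_forall_hinner_eq_zero (hrank : GenericRank h) (hw : w ≠ 0)
    {S : Finset (Fin K)} (hS : ∀ k ∈ S, hinner (h k) w = 0) : #S < N := by
  by_contra! hle
  have hA : _ = Fintype.card (Fin N) :=
    (hrank S).trans (by rw [min_eq_left hle, Fintype.card_fin])
  refine hw (star_eq_zero.mp (Matrix.eq_zero_of_vecMul_eq_zero_of_rank_eq_card hA ?_))
  -- the entries of `star w ᵥ* A` are the conjugates `star (hᴴ w)`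
  funext k
  simpa [Matrix.vecMul, dotProduct, hinner, mul_comm] using congrArg star (hS k.1 k.2)

theorem card_filter_mem_eq_sum_Gsize (B : Finset ℕ) :
    #{k | (μ k : ℕ) ∈ B} = ∑ j ∈ B, Gsize μ j := by
  rw [card_eq_sum_card_fiberwise (f := fun k => (μ k : ℕ)) (s := {k | (μ k : ℕ) ∈ B}) (t := B)
    (fun k hk => (mem_filter.mp hk).2)]
  refine sum_congr rfl fun j hj => congrArg card ?_
  ext k
  simp only [mem_filter, mem_univ, true_and, and_iff_right_iff_imp]
  exact fun hk => hk ▸ hj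

variable {μ}

theorem sum_Gsize_lt_of_forall_not_interferes (hrank : GenericRank h) (hw : w ≠ 0)
    {B : Finset ℕ} (hB : ∀ j ∈ B, ¬ Interferes h μ w j) : ∑ j ∈ B, Gsize μ j < N := by
  rw [← card_filter_mem_eq_sum_Gsize]
  refine card_lt_of_forall_hinner_eq_zero hrank hw fun k hk => ?_
  by_contra hne
  exact hB _ (mem_filter.mp hk).2 ⟨k, rfl, hne⟩

open scoped Classical in
theorem card_lt_card_filter_interferes_add (hrank : GenericRank h) (hw : w ≠ 0)
    (hord : MonotoneOn (Gsize μ) (Set.Iio M)) {s : Finset ℕ} {c t : ℕ} (hs : s ⊆ Ico c M)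
    (ht : N ≤ ∑ i ∈ Ico c (c + t), Gsize μ i) :
    #s < #{j ∈ s | Interferes h μ w j} + t := by
  rw [← card_filter_add_card_filter_not (Interferes h μ w), add_lt_add_iff_left]
  set silent := {j ∈ s | ¬ Interferes h μ w j}
  have hsilent : ∑ j ∈ silent, Gsize μ j < N :=
    sum_Gsize_lt_of_forall_not_interferes hrank hw fun j hj => (mem_filter.mp hj).2
  by_contra! hle
  have := calc ∑ i ∈ Ico c (c + t), Gsize μ i
      _ ≤ ∑ i ∈ Ico c (c + #silent), Gsize μ i :=
        sum_le_sum_of_subset (Ico_subset_Ico_right (by omega))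
      _ ≤ ∑ j ∈ silent, Gsize μ j :=
        sum_Ico_le_sum_of_monotoneOn hord silent ((filter_subset _ s).trans hs)
  omega

end Interference

theorem stmt3_general {N K M : ℕ} (h : Fin K → Fin N → ℂ) (μ : Fin K → Fin M)
    (hrank : GenericRank h)
    (hord : ∀ m m' : ℕ, m ≤ m' → m' < M → Gsize μ m ≤ Gsize μ m')
    (MD : ℕ)
    (hNhi : N < NL μ (MD + 1))
    (w : Fin N → ℂ) (hw : w ≠ 0) :
    (M - MD ≤
      {j : ℕ | 1 ≤ j ∧ j < M ∧ ∃ k : Fin K, (μ k : ℕ) = j ∧ hinner (h k) w ≠ 0}.ncard) ∧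
    (∀ m : ℕ, 1 ≤ m → m < M →
      M - MD - 1 ≤
        {j : ℕ | j < M ∧ j ≠ m ∧ ∃ k : Fin K, (μ k : ℕ) = j ∧ hinner (h k) w ≠ 0}.ncard) := by
  classical
  have hmono : MonotoneOn (Gsize μ) (Set.Iio M) := fun a _ b hb hab => hord a b hab hb
  have hfirst : N ≤ ∑ i ∈ Ico 1 (1 + MD), Gsize μ i := by
    rw [NL] at hNhi; rw [add_comm]; omega
  constructor
  · have hset : {j : ℕ | 1 ≤ j ∧ j < M ∧ Interferes h μ w j} =
        ↑{j ∈ Ico 1 M | Interferes h μ w j} := by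
      ext; simp [and_assoc]
    have hcount := card_lt_card_filter_interferes_add hrank hw hmono subset_rfl hfirst
    rw [Nat.card_Ico] at hcount
    change _ ≤ Set.ncard {j : ℕ | 1 ≤ j ∧ j < M ∧ Interferes h μ w j}
    rw [hset, Set.ncard_coe_finset]
    omega
  · intro m _ hm
    have hset : {j : ℕ | j < M ∧ j ≠ m ∧ Interferes h μ w j} =
        ↑{j ∈ (range M).erase m | Interferes h μ w j} := by
      ext; simp [and_assoc, and_left_comm]
    have hfirst' : N ≤ ∑ i ∈ Ico 0 (0 + (MD + 1)), Gsize μ i :=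
      hfirst.trans (sum_le_sum_of_subset (Ico_subset_Ico (Nat.zero_le _) (by omega)))
    have hcount := card_lt_card_filter_interferes_add hrank hw hmono
      (s := (range M).erase m) (fun j hj => by simp_all) hfirst'
    rw [card_erase_of_mem (mem_range.mpr hm), card_range] at hcount
    change _ ≤ Set.ncard {j : ℕ | j < M ∧ j ≠ m ∧ Interferes h μ w j}
    rw [hset, Set.ncard_coe_finset]
    omega

/-- **Lemma 1 (minimum number of interfered groups).** Under the generic rank assumption,
with groups of nondecreasing sizes (groups indexed from `0`, so group `0` is the smallest,
matching `𝒢₁` of the paper) and `N_{M_D*} ≤ N < N_{M_D*+1}` for some `M_D* ∈ {1,…,M−1}`,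
every nonzero beamforming vector `w` interferes with (i.e. `h_kᴴ w ≠ 0` for some user
`k` of) at least `M − M_D*` of the groups `2,…,M` (0-indexed: `1,…,M−1`), and, for every
`m ∈ {2,…,M}`, with at least `M − M_D* − 1` of the groups in `{1,…,M}∖{m}`. -/
theorem stmt3 {N K M : ℕ} (h : Fin K → Fin N → ℂ) (μ : Fin K → Fin M)
    (hrank : GenericRank h)
    (hord : ∀ m m' : ℕ, m ≤ m' → m' < M → Gsize μ m ≤ Gsize μ m')
    (MD : ℕ) (hMD1 : 1 ≤ MD) (hMD2 : MD + 1 ≤ M)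
    (hNlo : NL μ MD ≤ N) (hNhi : N < NL μ (MD + 1))
    (w : Fin N → ℂ) (hw : w ≠ 0) :
    (M - MD ≤
      {j : ℕ | 1 ≤ j ∧ j < M ∧ ∃ k : Fin K, (μ k : ℕ) = j ∧ hinner (h k) w ≠ 0}.ncard) ∧
    (∀ m : ℕ, 1 ≤ m → m < M →
      M - MD - 1 ≤
        {j : ℕ | j < M ∧ j ≠ m ∧ ∃ k : Fin K, (μ k : ℕ) = j ∧ hinner (h k) w ≠ 0}.ncard) :=
  stmt3_general h μ hrank hord MD hNhi w hw
end
end
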